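/- arXiv:1210.8412 — 3 statements merged into one kernel-verified Lean document; each statement's English description precedes it below -/
import Mathlib

section
/- Let H be a diagonal generator H = (h_1, h_2, h_3), i.e. H(σ_0) = 0 and H(σ_i) = h_i σ_i for i = 1,2,3 in the Pauli basis, with H self-adjoint and positive semidefinite and H(I_2) = 0. Then e^{-tH} is completely positive for all t ≥ 0 if and only if there exist constants a_1, a_2, a_3 ≥ 0 such that H = a_1 Γ_1 + a_2 Γ_2 + a_3 Γ_3, where Γ_1 = (0,1,1), Γ_2 = (1,0,1), Γ_3 = (1,1,0). -/
open scoped Matrix ComplexOrder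

/- Common definitions: matrix algebras, Schatten norms, superoperator norms,
   tensor products of superoperators, complete positivity, semigroup generators. -/

namespace QHC

/-- The algebra of complex matrices indexed by `a`. -/
abbrev Mat (a : Type*) [Fintype a] [DecidableEq a] := Matrix a a ℂ

variable {a b : Type*} [Fintype a] [DecidableEq a] [Fintype b] [DecidableEq b]

/-- The Schatten `p`-norm `‖M‖_p = (Tr |M|^p)^{1/p}`, computed via the
eigenvalues of the positive semidefinite matrix `Mᴴ * M` (whose eigenvalues are the
squares of the singular values of `M`). -/
noncomputable def schatten (p : ℝ) (M : Mat a) : ℝ :=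
  (∑ i, (Matrix.posSemidef_conjTranspose_mul_self M).isHermitian.eigenvalues i ^ (p / 2)) ^ (1 / p)

/-- The normalized Schatten `p`-norm `|||M|||_p = (k⁻¹ Tr |M|^p)^{1/p}`. -/
noncomputable def nschatten (p : ℝ) (M : Mat a) : ℝ :=
  ((Fintype.card a : ℝ)⁻¹ *
    ∑ i, (Matrix.posSemidef_conjTranspose_mul_self M).isHermitian.eigenvalues i ^ (p / 2)) ^ (1 / p)

/-- The `p → q` operator norm of a superoperator, for the Schatten norms. -/
noncomputable def opNorm (p q : ℝ) (L : Mat a →ₗ[ℂ] Mat a) : ℝ :=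
  ⨆ M : Mat a, schatten q (L M) / schatten p M

/-- The `p → q` operator norm of a superoperator, for the normalized Schatten norms. -/
noncomputable def nOpNorm (p q : ℝ) (L : Mat a →ₗ[ℂ] Mat a) : ℝ :=
  ⨆ M : Mat a, nschatten q (L M) / nschatten p M

/-- A superoperator is self-adjoint w.r.t. the inner product `⟨A, B⟩ = Tr(Aᴴ B)`. -/
def IsSelfAdjointMap (L : Mat a →ₗ[ℂ] Mat a) : Prop :=
  ∀ A B : Mat a, (Aᴴ * L B).trace = ((L A)ᴴ * B).trace

/-- A superoperator is positive semidefinite: self-adjoint and `⟨M, L M⟩ ≥ 0` for all `M`. -/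
def IsPosSemidefMap (L : Mat a →ₗ[ℂ] Mat a) : Prop :=
  IsSelfAdjointMap L ∧ ∀ M : Mat a, 0 ≤ (Mᴴ * L M).trace

/-- The tensor product `L₁ ⊗ L₂` of two superoperators, acting on matrices indexed by
`a × b`, characterized by `(L₁ ⊗ L₂)(E_{ik} ⊗ E_{jl}) = L₁(E_{ik}) ⊗ L₂(E_{jl})` on the
basis of matrix units and extended linearly. -/
noncomputable def tensorMap (L₁ : Mat a →ₗ[ℂ] Mat a) (L₂ : Mat b →ₗ[ℂ] Mat b) :
    Mat (a × b) →ₗ[ℂ] Mat (a × b) where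
  toFun M := Matrix.of fun s t => ∑ i : a, ∑ k : a, ∑ j : b, ∑ l : b,
      L₁ (Matrix.single i k 1) s.1 t.1 *
        L₂ (Matrix.single j l 1) s.2 t.2 * M (i, j) (k, l)
  map_add' M N := by
    ext s t
    simp [Matrix.add_apply, mul_add, Finset.sum_add_distrib]
  map_smul' c M := by
    ext s t
    simp only [Matrix.smul_apply, smul_eq_mul, Matrix.of_apply, RingHom.id_apply,
      Finset.mul_sum]
    exact Finset.sum_congr rfl fun i _ => Finset.sum_congr rfl fun k _ =>
      Finset.sum_congr rfl fun j _ => Finset.sum_congr rfl fun l _ => by ring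

/-- The `n`-fold tensor product `L 1 ⊗ L 2 ⊗ ⋯ ⊗ L n` of qubit superoperators, acting on
`2^n × 2^n` matrices indexed by the boolean cube `Fin n → Fin 2`; it is characterized by
its action `⊗_j (L j)(E_{u_j v_j})` on the tensor basis of matrix units, extended linearly. -/
noncomputable def tensorPow {n : ℕ} (L : Fin n → (Mat (Fin 2) →ₗ[ℂ] Mat (Fin 2))) :
    Mat (Fin n → Fin 2) →ₗ[ℂ] Mat (Fin n → Fin 2) where
  toFun M := Matrix.of fun s t => ∑ u : Fin n → Fin 2, ∑ v : Fin n → Fin 2,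
      (∏ j, (L j) (Matrix.single (u j) (v j) 1) (s j) (t j)) * M u v
  map_add' M N := by
    ext s t
    simp [Matrix.add_apply, mul_add, Finset.sum_add_distrib]
  map_smul' c M := by
    ext s t
    simp only [Matrix.smul_apply, smul_eq_mul, Matrix.of_apply, RingHom.id_apply,
      Finset.mul_sum]
    exact Finset.sum_congr rfl fun u _ => Finset.sum_congr rfl fun v _ => by ring

/-- A superoperator `L` is completely positive if `id_m ⊗ L` preserves positive
semidefiniteness for every `m`. -/
def IsCompletelyPositive (L : Mat a →ₗ[ℂ] Mat a) : Prop :=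
  ∀ m : ℕ, ∀ A : Mat (Fin m × a), A.PosSemidef → ((tensorMap LinearMap.id L) A).PosSemidef

/-- A superoperator is trace preserving if it preserves traces. -/
def IsTracePreserving (L : Mat a →ₗ[ℂ] Mat a) : Prop :=
  ∀ M : Mat a, (L M).trace = M.trace

/-- A unital qubit channel: completely positive, trace preserving, and unital. -/
def IsUnitalQubitChannel (Φ : Mat (Fin 2) →ₗ[ℂ] Mat (Fin 2)) : Prop :=
  IsCompletelyPositive Φ ∧ IsTracePreserving Φ ∧ Φ 1 = 1

/-- The exponential `e^L` of a superoperator, defined via the exponential of its matrix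
in the standard basis of the matrix algebra. -/
noncomputable def expMap (L : Mat a →ₗ[ℂ] Mat a) : Mat a →ₗ[ℂ] Mat a :=
  Matrix.toLin (Matrix.stdBasis ℂ a a) (Matrix.stdBasis ℂ a a)
    (NormedSpace.exp (LinearMap.toMatrix (Matrix.stdBasis ℂ a a) (Matrix.stdBasis ℂ a a) L))

/-- The set `G` of generators: `H(I₂) = 0`, `H` self-adjoint and positive semidefinite. -/
def memG (H : Mat (Fin 2) →ₗ[ℂ] Mat (Fin 2)) : Prop :=
  H 1 = 0 ∧ IsPosSemidefMap H

/-- The set `G^{CP}` of generators in `G` whose semigroup `e^{-tH}` is completely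
positive for all `t ≥ 0`. -/
def memGCP (H : Mat (Fin 2) →ₗ[ℂ] Mat (Fin 2)) : Prop :=
  memG H ∧ ∀ t : ℝ, 0 ≤ t → IsCompletelyPositive (expMap ((-(t : ℂ)) • H))

/-- `‖H‖_min`, the infimum of the Rayleigh quotient of `H` over traceless nonzero matrices. -/
noncomputable def normMin (H : Mat (Fin 2) →ₗ[ℂ] Mat (Fin 2)) : ℝ :=
  ⨅ M : {M : Mat (Fin 2) // M.trace = 0 ∧ M ≠ 0},
    ((M.1ᴴ * H M.1).trace).re / ((M.1ᴴ * M.1).trace).re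

/-- The set `G^{CP}_1` of unit-rate generators. -/
def memGCP1 (H : Mat (Fin 2) →ₗ[ℂ] Mat (Fin 2)) : Prop :=
  memGCP H ∧ normMin H = 1

/-- The Pauli matrices `σ₀ = I₂, σ₁, σ₂, σ₃`. -/
noncomputable def pauli : Fin 4 → Mat (Fin 2) :=
  ![1, !![0, 1; 1, 0], !![0, -Complex.I; Complex.I, 0], !![1, 0; 0, -1]]

/-- The qubit depolarizing channel `Δ_λ(M) = λ M + ((1-λ)/2) Tr(M) I₂`. -/
noncomputable def depol (l : ℝ) : Mat (Fin 2) →ₗ[ℂ] Mat (Fin 2) where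
  toFun M := (l : ℂ) • M + (((1 - l : ℝ) : ℂ) / 2 * M.trace) • 1
  map_add' M N := by
    simp only [Matrix.trace_add, mul_add, add_smul, smul_add]
    abel
  map_smul' c M := by
    simp only [Matrix.trace_smul, smul_eq_mul, smul_smul, smul_add, RingHom.id_apply]
    rw [mul_left_comm]
    ring_nf

/-- The uniform generator `H_u(M) = M - (1/2) Tr(M) I₂`. -/
noncomputable def uniformGen : Mat (Fin 2) →ₗ[ℂ] Mat (Fin 2) where
  toFun M := M - (M.trace / 2) • 1
  map_add' M N := by
    simp only [Matrix.trace_add, add_div, add_smul]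
    abel
  map_smul' c M := by
    simp only [Matrix.trace_smul, smul_eq_mul, RingHom.id_apply, smul_sub, smul_smul,
      mul_div_assoc]

/-- The matrix `f(A)` obtained by applying `f : ℝ → ℝ` to a Hermitian matrix `A` via the
spectral decomposition (functional calculus). -/
noncomputable def herFun (A : Mat a) (hA : A.IsHermitian) (f : ℝ → ℝ) : Mat a :=
  (hA.eigenvectorUnitary : Mat a) *
    Matrix.diagonal (fun i => (f (hA.eigenvalues i) : ℂ)) *
    (hA.eigenvectorUnitary : Mat a)ᴴ

/-- The real power `A^r` of a positive semidefinite matrix, via functional calculus. -/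
noncomputable def posPow (A : Mat a) (hA : A.IsHermitian) (r : ℝ) : Mat a :=
  herFun A hA (fun x => x ^ r)

/-- The diagonal qubit generator `H = (h₁, h₂, h₃)` in the Pauli basis:
`H(σ₀) = 0` and `H(σᵢ) = hᵢ σᵢ` for `i = 1,2,3`. -/
noncomputable def diagGen (h₁ h₂ h₃ : ℝ) : Mat (Fin 2) →ₗ[ℂ] Mat (Fin 2) where
  toFun M := ((h₁ : ℂ) * ((pauli 1 * M).trace / 2)) • pauli 1
    + ((h₂ : ℂ) * ((pauli 2 * M).trace / 2)) • pauli 2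
    + ((h₃ : ℂ) * ((pauli 3 * M).trace / 2)) • pauli 3
  map_add' M N := by
    simp only [Matrix.mul_add, Matrix.trace_add, add_div, mul_add, add_smul]
    abel
  map_smul' c M := by
    simp only [Matrix.mul_smul, Matrix.trace_smul, smul_eq_mul, RingHom.id_apply, smul_add,
      smul_smul]
    ring_nf

end QHC

/-!
The semigroup `e^{-tH}` of a diagonal generator `H = (h₁, h₂, h₃)` is the Pauli channel with
eigenvalues `1, e^{-th₁}, e^{-th₂}, e^{-th₃}` on `σ₀, σ₁, σ₂, σ₃`. A Pauli channel is the mixture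
`M ↦ ∑ pᵢ σᵢ M σᵢ` whose weights `pᵢ` are the Hadamard transform of its eigenvalues, and it is
completely positive exactly when all `pᵢ ≥ 0`: if they are, this is a Kraus decomposition; and the
vectorised Pauli matrices are eigenvectors of its Choi matrix with eigenvalues `4 pᵢ`.
For the semigroup, `pᵢ ≥ 0` for all `t ≥ 0` is equivalent to the triangle inequalities
`hᵢ ≤ hⱼ + hₖ`: differentiating at `t = 0` gives necessity, and `e^{-thᵢ} ≥ e^{-thⱼ} e^{-thₖ}` gives
`1 - e^{-thⱼ} - e^{-thₖ} + e^{-thᵢ} ≥ (1 - e^{-thⱼ}) (1 - e^{-thₖ}) ≥ 0`. The triangle inequalities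
describe the cone spanned by `Γ₁, Γ₂, Γ₃`, with `aᵢ = (hⱼ + hₖ - hᵢ) / 2`.
-/

theorem Matrix.exp_mulVec_of_mulVec_eq_smul {n : Type*} [Fintype n] [DecidableEq n]
    {B : Matrix n n ℂ} {x : n → ℂ} {c : ℂ} (h : B *ᵥ x = c • x) :
    NormedSpace.exp B *ᵥ x = Complex.exp c • x := by
  let _ : NormedRing (Matrix n n ℂ) := Matrix.linftyOpNormedRing
  let _ : NormedAlgebra ℂ (Matrix n n ℂ) := Matrix.linftyOpNormedAlgebra
  have hpow (k : ℕ) : B ^ k *ᵥ x = c ^ k • x := by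
    induction k with
    | zero => simp
    | succ k ih =>
      rw [pow_succ, ← Matrix.mulVec_mulVec, h, Matrix.mulVec_smul, ih, smul_smul, pow_succ']
  have hB := (NormedSpace.exp_series_hasSum_exp' (𝕂 := ℂ) B).map
    (Matrix.mulVec.addMonoidHomLeft x) (continuous_id.matrix_mulVec continuous_const)
  have hc := (NormedSpace.exp_series_hasSum_exp' (𝕂 := ℂ) c).smul_const x
  rw [← Complex.exp_eq_exp_ℂ] at hc
  refine hB.unique ?_
  convert hc using 2 with k
  simp [Matrix.mulVec.addMonoidHomLeft, Matrix.smul_mulVec, hpow, smul_smul]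

namespace QHC

open Matrix Real
open scoped Kronecker

section Superoperators

variable {b : Type*} [Fintype b] [DecidableEq b]

theorem expMap_apply_of_eq_smul {L : Mat b →ₗ[ℂ] Mat b} {v : Mat b} {c : ℂ}
    (h : L v = c • v) : expMap L v = Complex.exp c • v := by
  set e := Matrix.stdBasis ℂ b b
  have hv : LinearMap.toMatrix e e L *ᵥ e.repr v = c • e.repr v := by
    rw [LinearMap.toMatrix_mulVec_repr, h, map_smul]
    rfl
  have hexp := LinearMap.toMatrix_mulVec_repr e e (expMap L) v
  rw [expMap, LinearMap.toMatrix_toLin, exp_mulVec_of_mulVec_eq_smul hv] at hexp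
  refine e.repr.injective (Finsupp.ext fun i => ?_)
  rw [map_smul]
  exact (congrFun hexp i).symm

theorem tensorMap_id_apply {m : Type*} [Fintype m] [DecidableEq m] (L : Mat b →ₗ[ℂ] Mat b)
    (A : Mat (m × b)) (s t : m × b) :
    tensorMap LinearMap.id L A s t =
      ∑ j, ∑ l, L (single j l 1) s.2 t.2 * A (s.1, j) (t.1, l) := by
  simp [tensorMap, single_apply, ite_and]

def conjMap (P : Mat b) : Mat b →ₗ[ℂ] Mat b :=
  LinearMap.mulLeft ℂ P ∘ₗ LinearMap.mulRight ℂ Pᴴ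

theorem conjMap_apply (P M : Mat b) : conjMap P M = P * M * Pᴴ :=
  (Matrix.mul_assoc _ _ _).symm

theorem conjMap_single_apply (P : Mat b) (j l s t : b) :
    conjMap P (single j l 1) s t = P s j * star (P t l) := by
  simp [conjMap_apply, mul_apply, single_apply, ite_and]

theorem one_kronecker_mul_mul_conjTranspose_apply {m : Type*} [Fintype m] [DecidableEq m]
    (P : Mat b) (A : Mat (m × b)) (s t : m × b) :
    ((1 : Mat m) ⊗ₖ P * A * ((1 : Mat m) ⊗ₖ P)ᴴ) s t =
      ∑ j, ∑ l, P s.2 j * star (P t.2 l) * A (s.1, j) (t.1, l) := by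
  simp only [mul_apply, conjTranspose_apply, kroneckerMap_apply, Fintype.sum_prod_type,
    one_apply, ite_mul, one_mul, zero_mul, mul_ite, mul_zero, star_zero,
    apply_ite (star : ℂ → ℂ), Finset.sum_ite_irrel, Finset.sum_const_zero, Finset.sum_ite_eq,
    Finset.mem_univ, if_true, Finset.sum_mul]
  rw [Finset.sum_comm]
  exact Finset.sum_congr rfl fun j _ => Finset.sum_congr rfl fun l _ => by ring

theorem isCompletelyPositive_sum_smul_conjMap {ι : Type*} [Fintype ι] {p : ι → ℂ}
    (hp : ∀ i, 0 ≤ p i) (P : ι → Mat b) : IsCompletelyPositive (∑ i, p i • conjMap (P i)) := by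
  intro m A hA
  have hkraus : tensorMap LinearMap.id (∑ i, p i • conjMap (P i)) A =
      ∑ i, p i • ((1 : Mat (Fin m)) ⊗ₖ P i * A * ((1 : Mat (Fin m)) ⊗ₖ P i)ᴴ) := by
    ext s t
    simp only [tensorMap_id_apply, LinearMap.sum_apply, LinearMap.smul_apply, Matrix.sum_apply,
      Matrix.smul_apply, conjMap_single_apply, smul_eq_mul,
      one_kronecker_mul_mul_conjTranspose_apply, Finset.sum_mul, Finset.mul_sum]
    conv_lhs => enter [2, j]; rw [Finset.sum_comm]
    rw [Finset.sum_comm]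
    simp only [mul_assoc]
  rw [hkraus]
  exact posSemidef_sum _ fun i _ => (hA.mul_mul_conjTranspose_same _).smul (hp i)

def maxEntangled (b : Type*) [DecidableEq b] : b × b → ℂ := fun p => if p.1 = p.2 then 1 else 0

theorem tensorMap_id_vecMulVec_maxEntangled_apply (L : Mat b →ₗ[ℂ] Mat b) (s t : b × b) :
    tensorMap LinearMap.id L (vecMulVec (maxEntangled b) (star (maxEntangled b))) s t =
      L (single s.1 t.1 1) s.2 t.2 := by
  simp [tensorMap_id_apply, maxEntangled, vecMulVec_apply]

end Superoperators

theorem trace_pauli_mul_pauli (i j : Fin 4) :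
    (pauli i * pauli j).trace = if i = j then 2 else 0 := by
  fin_cases i <;> fin_cases j <;> simp [pauli, trace_fin_two] <;> norm_num

theorem pauli_zero : pauli 0 = 1 := rfl

theorem trace_pauli (i : Fin 4) : (pauli i).trace = if i = 0 then 2 else 0 := by
  simpa [pauli_zero, eq_comm] using trace_pauli_mul_pauli 0 i

theorem pauli_ne_zero (i : Fin 4) : pauli i ≠ 0 := by
  intro h
  simpa [h] using trace_pauli_mul_pauli i i

theorem conjTranspose_pauli (i : Fin 4) : (pauli i)ᴴ = pauli i := by
  fin_cases i <;> ext k l <;> fin_cases k <;> fin_cases l <;> simp [pauli]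

theorem sum_trace_pauli_mul_smul_pauli (M : Mat (Fin 2)) :
    ∑ i, ((pauli i * M).trace / 2) • pauli i = M := by
  ext i j
  fin_cases i <;> fin_cases j <;>
    simp [Fin.sum_univ_four, pauli, trace_fin_two, vecMul, dotProduct] <;> ring_nf <;>
    simp only [Complex.I_sq] <;> ring

theorem pauli_ext {f g : Mat (Fin 2) →ₗ[ℂ] Mat (Fin 2)} (h : ∀ i, f (pauli i) = g (pauli i)) :
    f = g := by
  ext1 M
  rw [← sum_trace_pauli_mul_smul_pauli M]
  simp only [map_sum, map_smul, h]

theorem conjMap_pauli_pauli (i j : Fin 4) :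
    conjMap (pauli i) (pauli j) = (if i = 0 ∨ j = 0 ∨ i = j then 1 else -1 : ℂ) • pauli j := by
  rw [conjMap_apply, conjTranspose_pauli]
  fin_cases i <;> fin_cases j <;> ext k l <;> fin_cases k <;> fin_cases l <;>
    simp [pauli, one_fin_two]

theorem diagGen_pauli (h₁ h₂ h₃ : ℝ) (i : Fin 4) :
    diagGen h₁ h₂ h₃ (pauli i) = (![0, h₁, h₂, h₃] i : ℂ) • pauli i := by
  fin_cases i <;> simp [diagGen, trace_pauli_mul_pauli]

theorem diagGen_one (h₁ h₂ h₃ : ℝ) : diagGen h₁ h₂ h₃ 1 = 0 := by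
  simpa [pauli_zero] using diagGen_pauli h₁ h₂ h₃ 0

theorem eq_diagGen_of_apply_pauli {H : Mat (Fin 2) →ₗ[ℂ] Mat (Fin 2)} {h₁ h₂ h₃ : ℝ}
    (h₀ : H 1 = 0) (hH₁ : H (pauli 1) = (h₁ : ℂ) • pauli 1)
    (hH₂ : H (pauli 2) = (h₂ : ℂ) • pauli 2) (hH₃ : H (pauli 3) = (h₃ : ℂ) • pauli 3) :
    H = diagGen h₁ h₂ h₃ := by
  refine pauli_ext fun i => ?_
  fin_cases i
  · simpa [pauli_zero, diagGen_one] using h₀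
  all_goals simp [diagGen_pauli, hH₁, hH₂, hH₃]

theorem diagGen_inj {h₁ h₂ h₃ k₁ k₂ k₃ : ℝ} :
    diagGen h₁ h₂ h₃ = diagGen k₁ k₂ k₃ ↔ h₁ = k₁ ∧ h₂ = k₂ ∧ h₃ = k₃ := by
  refine ⟨fun h => ?_, by rintro ⟨rfl, rfl, rfl⟩; rfl⟩
  have hi (i : Fin 4) := (smul_left_injective ℂ (pauli_ne_zero i)).eq_iff.mp
    (by simpa only [diagGen_pauli] using LinearMap.congr_fun h (pauli i))
  exact ⟨by simpa using hi 1, by simpa using hi 2, by simpa using hi 3⟩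

theorem smul_diagGen (c h₁ h₂ h₃ : ℝ) :
    (c : ℂ) • diagGen h₁ h₂ h₃ = diagGen (c * h₁) (c * h₂) (c * h₃) := by
  refine pauli_ext fun i => ?_
  fin_cases i <;> simp [diagGen_pauli, smul_smul, -Complex.coe_smul]

theorem diagGen_add (h₁ h₂ h₃ k₁ k₂ k₃ : ℝ) :
    diagGen h₁ h₂ h₃ + diagGen k₁ k₂ k₃ = diagGen (h₁ + k₁) (h₂ + k₂) (h₃ + k₃) := by
  refine pauli_ext fun i => ?_
  fin_cases i <;> simp [diagGen_pauli, add_smul]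

theorem diagGen_eq_nonneg_combination_iff (h₁ h₂ h₃ : ℝ) :
    (∃ a₁ a₂ a₃ : ℝ, 0 ≤ a₁ ∧ 0 ≤ a₂ ∧ 0 ≤ a₃ ∧
      diagGen h₁ h₂ h₃ = (a₁ : ℂ) • diagGen 0 1 1 + (a₂ : ℂ) • diagGen 1 0 1 +
        (a₃ : ℂ) • diagGen 1 1 0) ↔
      h₁ ≤ h₂ + h₃ ∧ h₂ ≤ h₁ + h₃ ∧ h₃ ≤ h₁ + h₂ := by
  simp only [smul_diagGen, diagGen_add, diagGen_inj]
  constructor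
  · rintro ⟨a₁, a₂, a₃, h₁', h₂', h₃', rfl, rfl, rfl⟩
    refine ⟨?_, ?_, ?_⟩ <;> linarith
  · rintro ⟨h₁', h₂', h₃'⟩
    exact ⟨(h₂ + h₃ - h₁) / 2, (h₁ + h₃ - h₂) / 2, (h₁ + h₂ - h₃) / 2,
      by linarith, by linarith, by linarith, by ring, by ring, by ring⟩

noncomputable def pauliChannel (l₁ l₂ l₃ : ℝ) : Mat (Fin 2) →ₗ[ℂ] Mat (Fin 2) :=
  (traceLinearMap (Fin 2) ℂ ℂ).smulRight ((1 / 2 : ℂ) • 1) + diagGen l₁ l₂ l₃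

theorem pauliChannel_pauli (l₁ l₂ l₃ : ℝ) (i : Fin 4) :
    pauliChannel l₁ l₂ l₃ (pauli i) = (![1, l₁, l₂, l₃] i : ℂ) • pauli i := by
  fin_cases i <;> simp [pauliChannel, diagGen_pauli, trace_pauli, pauli_zero, diagGen_one]

theorem expMap_neg_smul_diagGen (t h₁ h₂ h₃ : ℝ) :
    expMap (-(t : ℂ) • diagGen h₁ h₂ h₃) =
      pauliChannel (exp (-(t * h₁))) (exp (-(t * h₂))) (exp (-(t * h₃))) := by
  refine pauli_ext fun i => ?_
  rw [expMap_apply_of_eq_smul (c := -t * ![0, h₁, h₂, h₃] i)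
    (by simp [diagGen_pauli, smul_smul, -Complex.coe_smul]), pauliChannel_pauli]
  fin_cases i <;> simp

/-- The weights `pᵢ` of `pauliChannel l₁ l₂ l₃ = ∑ pᵢ σᵢ · σᵢ`. -/
noncomputable def pauliWeight (l₁ l₂ l₃ : ℝ) : Fin 4 → ℝ :=
  ![(1 + l₁ + l₂ + l₃) / 4, (1 + l₁ - l₂ - l₃) / 4, (1 - l₁ + l₂ - l₃) / 4,
    (1 - l₁ - l₂ + l₃) / 4]

theorem pauliChannel_eq_sum_smul_conjMap (l₁ l₂ l₃ : ℝ) :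
    pauliChannel l₁ l₂ l₃ = ∑ i, (pauliWeight l₁ l₂ l₃ i : ℂ) • conjMap (pauli i) := by
  refine pauli_ext fun j => ?_
  simp only [pauliChannel_pauli, LinearMap.sum_apply, LinearMap.smul_apply, conjMap_pauli_pauli,
    smul_smul, ← Finset.sum_smul]
  congr 1
  fin_cases j <;> simp [Fin.sum_univ_four, pauliWeight] <;> ring

theorem pauliWeight_nonneg_of_isCompletelyPositive {l₁ l₂ l₃ : ℝ}
    (h : IsCompletelyPositive (pauliChannel l₁ l₂ l₃)) (i : Fin 4) :
    0 ≤ pauliWeight l₁ l₂ l₃ i := by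
  set v : Fin 2 × Fin 2 → ℂ := fun p => pauli i p.1 p.2
  have hquad : star v ⬝ᵥ
      (tensorMap LinearMap.id (pauliChannel l₁ l₂ l₃)
        (vecMulVec (maxEntangled _) (star (maxEntangled _))) *ᵥ v) =
      ((4 * pauliWeight l₁ l₂ l₃ i : ℝ) : ℂ) := by
    simp only [dotProduct, mulVec, tensorMap_id_vecMulVec_maxEntangled_apply,
      pauliChannel_eq_sum_smul_conjMap, LinearMap.sum_apply, LinearMap.smul_apply,
      Matrix.sum_apply, Matrix.smul_apply, smul_eq_mul, conjMap_single_apply,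
      Fintype.sum_prod_type, Fin.sum_univ_two]
    fin_cases i <;> simp [v, pauli, pauliWeight, Fin.sum_univ_four]
    all_goals ring_nf
    simp only [Complex.I_sq]
    ring
  have hv := (h 2 _ (posSemidef_vecMulVec_self_star (maxEntangled _))).dotProduct_mulVec_nonneg v
  rw [hquad, Complex.zero_le_real] at hv
  linarith

theorem pauliChannel_isCompletelyPositive_iff (l₁ l₂ l₃ : ℝ) :
    IsCompletelyPositive (pauliChannel l₁ l₂ l₃) ↔ ∀ i, 0 ≤ pauliWeight l₁ l₂ l₃ i := by
  refine ⟨pauliWeight_nonneg_of_isCompletelyPositive, fun h => ?_⟩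
  rw [pauliChannel_eq_sum_smul_conjMap]
  exact isCompletelyPositive_sum_smul_conjMap (fun i => Complex.zero_le_real.mpr (h i)) _

theorem le_add_of_forall_exp_nonneg {a b c : ℝ}
    (h : ∀ t : ℝ, 0 ≤ t → 0 ≤ 1 + exp (-(t * a)) - exp (-(t * b)) - exp (-(t * c))) :
    a ≤ b + c := by
  have hexp (d : ℝ) : HasDerivAt (fun t => exp (-(t * d))) (-d) 0 := by
    simpa using ((hasDerivAt_id (0 : ℝ)).mul_const d).neg.exp
  have hderiv := (((hexp a).const_add 1).sub (hexp b)).sub (hexp c)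
  rw [show -a - -b - -c = b + c - a by ring] at hderiv
  refine sub_nonneg.mp (ge_of_tendsto hderiv.tendsto_slope_zero_right ?_)
  filter_upwards [self_mem_nhdsWithin] with t (ht : 0 < t)
  simpa using mul_nonneg (inv_nonneg.mpr ht.le) (h t ht.le)

theorem one_add_exp_sub_exp_sub_exp_nonneg {a b c t : ℝ} (ht : 0 ≤ t) (hb : 0 ≤ b)
    (hc : 0 ≤ c) (habc : a ≤ b + c) :
    0 ≤ 1 + exp (-(t * a)) - exp (-(t * b)) - exp (-(t * c)) := by
  have hb' : exp (-(t * b)) ≤ 1 := exp_le_one_iff.mpr (by nlinarith)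
  have hc' : exp (-(t * c)) ≤ 1 := exp_le_one_iff.mpr (by nlinarith)
  have hbc : exp (-(t * b)) * exp (-(t * c)) ≤ exp (-(t * a)) := by
    rw [← exp_add, exp_le_exp]
    nlinarith
  nlinarith [mul_nonneg (sub_nonneg.mpr hb') (sub_nonneg.mpr hc')]

theorem forall_pauliWeight_exp_nonneg_iff (h₁ h₂ h₃ : ℝ) :
    (∀ t : ℝ, 0 ≤ t →
      ∀ i, 0 ≤ pauliWeight (exp (-(t * h₁))) (exp (-(t * h₂))) (exp (-(t * h₃))) i) ↔
      h₁ ≤ h₂ + h₃ ∧ h₂ ≤ h₁ + h₃ ∧ h₃ ≤ h₁ + h₂ := by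
  simp only [pauliWeight, Fin.forall_fin_succ, Fin.isValue, cons_val_zero, cons_val_succ,
    cons_val_fin_one, forall_const]
  constructor
  · intro h
    refine ⟨le_add_of_forall_exp_nonneg fun t ht => ?_, le_add_of_forall_exp_nonneg fun t ht => ?_,
      le_add_of_forall_exp_nonneg fun t ht => ?_⟩
    · linarith [(h t ht).2.1]
    · linarith [(h t ht).2.2.1]
    · linarith [(h t ht).2.2.2]
  · rintro ⟨h₁₂₃, h₂₁₃, h₃₁₂⟩ t ht
    have hh₁ : 0 ≤ h₁ := by linarith
    have hh₂ : 0 ≤ h₂ := by linarith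
    have hh₃ : 0 ≤ h₃ := by linarith
    refine ⟨by positivity, ?_, ?_, ?_⟩
    · linarith [one_add_exp_sub_exp_sub_exp_nonneg ht hh₂ hh₃ h₁₂₃]
    · linarith [one_add_exp_sub_exp_sub_exp_nonneg ht hh₁ hh₃ h₂₁₃]
    · linarith [one_add_exp_sub_exp_sub_exp_nonneg ht hh₁ hh₂ h₃₁₂]

/-- **Lemma 4**: a diagonal generator `H = (h₁, h₂, h₃)` (self-adjoint, positive
semidefinite, `H(I₂) = 0`) generates a completely positive semigroup `e^{-tH}` for all
`t ≥ 0` if and only if `H = a₁ Γ₁ + a₂ Γ₂ + a₃ Γ₃` for some `a₁, a₂, a₃ ≥ 0`, where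
`Γ₁ = (0,1,1)`, `Γ₂ = (1,0,1)`, `Γ₃ = (1,1,0)`. -/
theorem diag_gen_CP_iff_nonneg_combination
    (h₁ h₂ h₃ : ℝ) (H : Mat (Fin 2) →ₗ[ℂ] Mat (Fin 2)) (hG : memG H)
    (hH1 : H (pauli 1) = (h₁ : ℂ) • pauli 1)
    (hH2 : H (pauli 2) = (h₂ : ℂ) • pauli 2)
    (hH3 : H (pauli 3) = (h₃ : ℂ) • pauli 3) :
    (∀ t : ℝ, 0 ≤ t → IsCompletelyPositive (expMap ((-(t : ℂ)) • H))) ↔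
      ∃ a₁ a₂ a₃ : ℝ, 0 ≤ a₁ ∧ 0 ≤ a₂ ∧ 0 ≤ a₃ ∧
        H = (a₁ : ℂ) • diagGen 0 1 1 + (a₂ : ℂ) • diagGen 1 0 1 +
          (a₃ : ℂ) • diagGen 1 1 0 := by
  obtain rfl := eq_diagGen_of_apply_pauli hG.1 hH1 hH2 hH3
  simp only [expMap_neg_smul_diagGen, pauliChannel_isCompletelyPositive_iff]
  rw [forall_pauliWeight_exp_nonneg_iff, diagGen_eq_nonneg_combination_iff]

end QHC
end

section
/- (Gross' Lemma, matrix algebra version.) Let H ∈ G^{CP}, and for n ≥ 1 let H^{(n)} = id_{M_{2^{n-1}}} ⊗ H acting on M_{2^n}. Then for every positive semidefinite A ∈ M_{2^n} and every p > 1, ⟨A^{p/2}, H^{(n)}(A^{p/2})⟩ ≤ ((p/2)^2 / (p-1)) · ⟨A, H^{(n)}(A^{p-1})⟩, where the matrix powers A^{p/2} and A^{p-1} are defined by the functional calculus for positive semidefinite matrices. -/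
open scoped Matrix ComplexOrder

/-!
Write `A = ∑ λᵢ Pᵢ` with rank-one spectral projections `Pᵢ`. Both sides become quadratic forms in
functions of the eigenvalues with coefficients `cᵢⱼ = Re Tr(Pᵢ H⁽ⁿ⁾(Pⱼ))`. This matrix is symmetric
(`H` is self-adjoint), has zero row sums (`H(1) = 0`), and has nonpositive off-diagonal entries: for
`i ≠ j`, `t ↦ Tr(Pᵢ e^{-tH⁽ⁿ⁾}(Pⱼ))` is nonnegative by complete positivity and vanishes at `t = 0`,
so its derivative `-cᵢⱼ` there is nonnegative. For such a matrix
`∑ cᵢⱼ uᵢ vⱼ = -½ ∑ cᵢⱼ (uᵢ - uⱼ)(vᵢ - vⱼ)`, which reduces the claim to the two-point inequality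
`(x^{p/2} - y^{p/2})² ≤ (p/2)²/(p-1) (x - y)(x^{p-1} - y^{p-1})`, i.e. Cauchy–Schwarz for the
integrals of `t^{p/2-1}` and `t^{p-2}` over `[y, x]`.
-/

namespace QHC

open Finset

section RealAnalysis

open intervalIntegral
open MeasureTheory (volume)

theorem sq_intervalIntegral_le {f : ℝ → ℝ} {y x : ℝ} (hyx : y ≤ x)
    (hf : IntervalIntegrable f volume y x)
    (hf2 : IntervalIntegrable (fun t => f t ^ 2) volume y x) :
    (∫ t in y..x, f t) ^ 2 ≤ (x - y) * ∫ t in y..x, f t ^ 2 := by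
  rcases hyx.eq_or_lt with rfl | hlt
  · simp
  set I := ∫ t in y..x, f t
  have hsq : ∫ t in y..x, (f t - I / (x - y)) ^ 2 =
      (∫ t in y..x, f t ^ 2) - I ^ 2 / (x - y) := by
    have hexp : (fun t => (f t - I / (x - y)) ^ 2) =
        fun t => f t ^ 2 - 2 * (I / (x - y)) * f t + (I / (x - y)) ^ 2 := by
      funext t; ring
    rw [hexp, integral_add (hf2.sub (hf.const_mul _)) intervalIntegrable_const,
      integral_sub hf2 (hf.const_mul _), intervalIntegral.integral_const_mul,
      intervalIntegral.integral_const, smul_eq_mul]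
    field_simp
    ring
  have hnonneg : 0 ≤ ∫ t in y..x, (f t - I / (x - y)) ^ 2 :=
    integral_nonneg hyx fun t _ => sq_nonneg _
  rw [hsq, sub_nonneg, div_le_iff₀ (sub_pos.2 hlt)] at hnonneg
  linarith

theorem rpow_half_sub_sq_le {p x y : ℝ} (hp : 1 < p) (hx : 0 ≤ x) (hy : 0 ≤ y) :
    (x ^ (p / 2) - y ^ (p / 2)) ^ 2 ≤
      (p / 2) ^ 2 / (p - 1) * ((x - y) * (x ^ (p - 1) - y ^ (p - 1))) := by
  wlog hyx : y ≤ x generalizing x y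
  · convert this hy hx (le_of_not_ge hyx) using 1 <;> ring
  have hsq : Set.EqOn (fun t : ℝ => t ^ (p - 2)) (fun t => (t ^ (p / 2 - 1)) ^ 2)
      (Set.uIcc y x) := fun t ht => by
    have ht : 0 ≤ t := hy.trans (Set.uIcc_of_le hyx ▸ ht).1
    simp only [← Real.rpow_natCast, ← Real.rpow_mul ht]
    ring_nf
  have hI : ∫ t in y..x, t ^ (p / 2 - 1) = (x ^ (p / 2) - y ^ (p / 2)) / (p / 2) := by
    rw [integral_rpow (Or.inl (by linarith))]
    ring_nf
  have hJ : ∫ t in y..x, (t ^ (p / 2 - 1)) ^ 2 = (x ^ (p - 1) - y ^ (p - 1)) / (p - 1) := by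
    rw [← integral_congr hsq, integral_rpow (Or.inl (by linarith))]
    ring_nf
  have hcs := sq_intervalIntegral_le (f := fun t => t ^ (p / 2 - 1)) hyx
    (intervalIntegrable_rpow' (by linarith))
    ((intervalIntegrable_rpow' (by linarith)).congr (hsq.mono Set.uIoc_subset_uIcc))
  rw [hI, hJ, div_pow, div_le_iff₀ (by positivity)] at hcs
  refine hcs.trans_eq ?_
  field_simp

theorem _root_.HasDerivAt.nonneg_of_isMinOn_Ici {f : ℝ → ℝ} {f' x : ℝ} (hf : HasDerivAt f f' x)
    (hmin : IsMinOn f (Set.Ici x) x) : 0 ≤ f' := by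
  have hmem : (1 : ℝ) ∈ posTangentConeAt (Set.Ici x) x :=
    mem_posTangentConeAt_of_segment_subset (by
      rw [segment_eq_Icc (by linarith)]; exact Set.Icc_subset_Ici_self)
  simpa using hmin.localize.hasFDerivWithinAt_nonneg hf.hasFDerivAt.hasFDerivWithinAt hmem

end RealAnalysis

section Laplacian

variable {ι : Type*} [Fintype ι]

structure IsLaplacian (c : ι → ι → ℝ) : Prop where
  symm : ∀ i j, c i j = c j i
  row_sum_eq_zero : ∀ i, ∑ j, c i j = 0
  nonpos_of_ne : ∀ i j, i ≠ j → c i j ≤ 0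

theorem IsLaplacian.sum_mul_sub_mul_sub {c : ι → ι → ℝ} (hc : IsLaplacian c) (u v : ι → ℝ) :
    ∑ i, ∑ j, c i j * ((u i - u j) * (v i - v j)) = -2 * ∑ i, ∑ j, u i * v j * c i j := by
  have hcol : ∀ j, ∑ i, c i j = 0 := fun j => by
    simpa only [hc.symm _ j] using hc.row_sum_eq_zero j
  have hdiag : ∑ i, ∑ j, c i j * (u i * v i) = 0 :=
    sum_eq_zero fun i _ => by rw [← sum_mul, hc.row_sum_eq_zero, zero_mul]
  have hdiag' : ∑ i, ∑ j, c i j * (u j * v j) = 0 := by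
    rw [sum_comm]; exact sum_eq_zero fun j _ => by rw [← sum_mul, hcol, zero_mul]
  have hswap : ∑ i, ∑ j, c i j * (u j * v i) = ∑ i, ∑ j, u i * v j * c i j := by
    rw [sum_comm]; simp only [hc.symm, mul_comm]
  have hexp : ∀ i j, c i j * ((u i - u j) * (v i - v j)) = c i j * (u i * v i) +
      c i j * (u j * v j) - u i * v j * c i j - c i j * (u j * v i) := fun i j => by ring
  simp only [hexp, sum_sub_distrib, sum_add_distrib, hdiag, hdiag', hswap]
  ring

theorem IsLaplacian.sum_mul_mul_le {c : ι → ι → ℝ} (hc : IsLaplacian c) {K : ℝ}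
    (x u v : ι → ℝ) (h : ∀ i j, (x i - x j) ^ 2 ≤ K * ((u i - u j) * (v i - v j))) :
    ∑ i, ∑ j, x i * x j * c i j ≤ K * ∑ i, ∑ j, u i * v j * c i j := by
  have hle : K * ∑ i, ∑ j, c i j * ((u i - u j) * (v i - v j)) ≤
      ∑ i, ∑ j, c i j * ((x i - x j) * (x i - x j)) := by
    simp only [mul_sum]
    refine sum_le_sum fun i _ => sum_le_sum fun j _ => ?_
    rcases eq_or_ne i j with rfl | hij
    · simp
    · nlinarith [h i j, hc.nonpos_of_ne i j hij]
  rw [hc.sum_mul_sub_mul_sub, hc.sum_mul_sub_mul_sub] at hle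
  linarith

end Laplacian

section Spectral

variable {ι : Type*} [Fintype ι] [DecidableEq ι] {A : Mat ι} (hA : A.IsHermitian)

theorem _root_.Matrix.PosSemidef.trace_mul_nonneg {P Q : Mat ι} (hP : P.PosSemidef)
    (hQ : Q.PosSemidef) : 0 ≤ (P * Q).trace := by
  open scoped MatrixOrder in
  obtain ⟨S, hS, -, rfl⟩ := CFC.exists_sqrt_of_isSelfAdjoint_of_quasispectrumRestricts
    hP.isHermitian (QuasispectrumRestricts.nnreal_of_nonneg hP.nonneg)
  rw [Matrix.mul_assoc, Matrix.trace_mul_comm]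
  have hSH : Sᴴ = S := hS.star_eq
  simpa only [hSH] using (hQ.conjTranspose_mul_mul_same S).trace_nonneg

noncomputable def eigenProj (i : ι) : Mat ι :=
  (hA.eigenvectorUnitary : Mat ι) * Matrix.single i i 1 * (hA.eigenvectorUnitary : Mat ι)ᴴ

theorem conjTranspose_eigenProj (i : ι) : (eigenProj hA i)ᴴ = eigenProj hA i := by
  simp only [eigenProj, Matrix.conjTranspose_mul, Matrix.conjTranspose_conjTranspose,
    Matrix.conjTranspose_single, star_one, Matrix.mul_assoc]

theorem posSemidef_eigenProj (i : ι) : (eigenProj hA i).PosSemidef := by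
  refine Matrix.PosSemidef.mul_mul_conjTranspose_same ?_ _
  rw [← Matrix.diagonal_single, Matrix.posSemidef_diagonal_iff]
  intro k
  rw [Pi.single_apply]
  split_ifs <;> simp

theorem eigenProj_mul_eigenProj_of_ne {i j : ι} (hij : i ≠ j) :
    eigenProj hA i * eigenProj hA j = 0 := by
  set U : Mat ι := (hA.eigenvectorUnitary : Mat ι)
  have hU : Uᴴ * U = 1 := Unitary.coe_star_mul_self _
  calc eigenProj hA i * eigenProj hA j
      = U * (Matrix.single i i 1 * (Uᴴ * U) * Matrix.single j j 1) * Uᴴ := by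
        simp only [eigenProj, U, Matrix.mul_assoc]
    _ = 0 := by
      rw [hU, Matrix.mul_one, Matrix.single_mul_single_of_ne (c := (1 : ℂ)) _ _ _ hij,
        Matrix.mul_zero, Matrix.zero_mul]

theorem conj_diagonal_eq_sum_eigenProj (v : ι → ℂ) :
    (hA.eigenvectorUnitary : Mat ι) * Matrix.diagonal v * (hA.eigenvectorUnitary : Mat ι)ᴴ =
      ∑ i, v i • eigenProj hA i := by
  rw [← Matrix.sum_single_eq_diagonal, mul_sum, sum_mul]
  refine sum_congr rfl fun i _ => ?_
  rw [eigenProj, ← Matrix.smul_mul, ← Matrix.mul_smul, Matrix.smul_single, smul_eq_mul, mul_one]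

theorem sum_eigenProj : ∑ i, eigenProj hA i = 1 := by
  have h := conj_diagonal_eq_sum_eigenProj hA fun _ => 1
  rw [Matrix.diagonal_one, Matrix.mul_one, ← Matrix.star_eq_conjTranspose,
    Matrix.mem_unitaryGroup_iff.mp hA.eigenvectorUnitary.2] at h
  simpa using h.symm

theorem herFun_eq_sum_eigenProj (f : ℝ → ℝ) :
    herFun A hA f = ∑ i, (f (hA.eigenvalues i) : ℂ) • eigenProj hA i :=
  conj_diagonal_eq_sum_eigenProj hA _

theorem herFun_id : herFun A hA id = A := by
  conv_rhs => rw [hA.spectral_theorem]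
  rfl

end Spectral

section TensorMap

variable {a b : Type*} [Fintype a] [DecidableEq a] [Fintype b] [DecidableEq b]

theorem tensorMap_id_eq_comp (L : Mat b →ₗ[ℂ] Mat b) (M : Mat (a × b)) :
    tensorMap LinearMap.id L M =
      Matrix.comp a a b b ℂ (((Matrix.comp a a b b ℂ).symm M).map L) := by
  ext s t
  have hblock : (Matrix.comp a a b b ℂ).symm M s.1 t.1 =
      ∑ j, ∑ l, M (s.1, j) (t.1, l) • Matrix.single j l 1 := by
    conv_lhs => rw [Matrix.matrix_eq_sum_single ((Matrix.comp a a b b ℂ).symm M s.1 t.1)]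
    simp only [Matrix.smul_single, smul_eq_mul, mul_one, Matrix.comp_symm_apply]
  simp only [Matrix.comp_apply, Matrix.map_apply, hblock, map_sum, map_smul, Matrix.sum_apply,
    Matrix.smul_apply, smul_eq_mul, tensorMap, LinearMap.coe_mk, AddHom.coe_mk, Matrix.of_apply,
    LinearMap.id_coe, id_eq, Matrix.single_apply, ite_and, ite_mul, one_mul, zero_mul]
  simp [mul_comm]

theorem tensorMap_id_id (M : Mat (a × b)) :
    tensorMap LinearMap.id (LinearMap.id : Mat b →ₗ[ℂ] Mat b) M = M := by
  rw [tensorMap_id_eq_comp, LinearMap.id_coe, Matrix.map_id, Equiv.apply_symm_apply]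

theorem tensorMap_id_one {L : Mat b →ₗ[ℂ] Mat b} (hL : L 1 = 0) :
    tensorMap LinearMap.id L (1 : Mat (a × b)) = 0 := by
  rw [tensorMap_id_eq_comp, ← Matrix.comp_one, Equiv.symm_apply_apply]
  ext s t
  simp only [Matrix.comp_apply, Matrix.map_apply, Matrix.one_apply]
  split_ifs <;> simp [hL]

theorem trace_conjTranspose_mul_eq_sum (X Y : Mat a) :
    (Xᴴ * Y).trace = ∑ i, ∑ j, star (X i j) * Y i j := by
  simp only [Matrix.trace, Matrix.diag, Matrix.mul_apply, Matrix.conjTranspose_apply]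
  exact sum_comm

theorem trace_conjTranspose_mul_comp (X Y : Matrix a a (Mat b)) :
    ((Matrix.comp a a b b ℂ X)ᴴ * Matrix.comp a a b b ℂ Y).trace =
      ∑ i, ∑ k, ((X i k)ᴴ * Y i k).trace := by
  simp only [trace_conjTranspose_mul_eq_sum, Fintype.sum_prod_type, Matrix.comp_apply]
  exact sum_congr rfl fun i _ => sum_comm

theorem IsSelfAdjointMap.tensorMap_id {L : Mat b →ₗ[ℂ] Mat b} (hL : IsSelfAdjointMap L) :
    IsSelfAdjointMap (tensorMap (LinearMap.id : Mat a →ₗ[ℂ] Mat a) L) := by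
  intro X Y
  obtain ⟨X, rfl⟩ := (Matrix.comp a a b b ℂ).surjective X
  obtain ⟨Y, rfl⟩ := (Matrix.comp a a b b ℂ).surjective Y
  simp only [tensorMap_id_eq_comp, Equiv.symm_apply_apply, trace_conjTranspose_mul_comp,
    Matrix.map_apply]
  exact sum_congr rfl fun i _ => sum_congr rfl fun k _ => hL _ _

theorem tensorMap_id_submatrix {a' : Type*} [Fintype a'] [DecidableEq a'] (f : a' → a)
    (L : Mat b →ₗ[ℂ] Mat b) (M : Mat (a × b)) :
    tensorMap LinearMap.id L (M.submatrix (Prod.map f id) (Prod.map f id)) =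
      (tensorMap LinearMap.id L M).submatrix (Prod.map f id) (Prod.map f id) := by
  simp only [tensorMap_id_eq_comp]
  rfl

theorem IsCompletelyPositive.tensorMap_id_posSemidef {Φ : Mat b →ₗ[ℂ] Mat b}
    (hΦ : IsCompletelyPositive Φ) {Q : Mat (a × b)} (hQ : Q.PosSemidef) :
    (tensorMap (LinearMap.id : Mat a →ₗ[ℂ] Mat a) Φ Q).PosSemidef := by
  let e := Fintype.equivFin a
  have h := (hΦ _ _ (hQ.submatrix (Prod.map e.symm id))).submatrix (Prod.map e id)
  rwa [tensorMap_id_submatrix, Matrix.submatrix_submatrix, Prod.map_comp_map,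
    e.symm_comp_self, Function.id_comp, Prod.map_id, Matrix.submatrix_id_id] at h

noncomputable def idTensorMapₗ : (Mat b →ₗ[ℂ] Mat b) →ₗ[ℂ] Mat (a × b) →ₗ[ℂ] Mat (a × b) where
  toFun L := tensorMap LinearMap.id L
  map_add' L L' := by
    ext M s t
    simp [tensorMap_id_eq_comp]
  map_smul' c L := by
    ext M s t
    simp [tensorMap_id_eq_comp]

end TensorMap

section Semigroup

variable {a b : Type*} [Fintype a] [DecidableEq a] [Fintype b] [DecidableEq b]

theorem expMap_zero : expMap (0 : Mat a →ₗ[ℂ] Mat a) = LinearMap.id := by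
  simp [expMap]

theorem hasDerivAt_expMap_smul (φ : (Mat a →ₗ[ℂ] Mat a) →ₗ[ℝ] ℝ) (L : Mat a →ₗ[ℂ] Mat a) :
    HasDerivAt (fun t : ℝ => φ (expMap ((t : ℂ) • L))) (φ L) 0 := by
  -- `NormedSpace.exp` only depends on the topology, so any algebra norm may be used here
  let _ : NormedRing (Matrix (a × a) (a × a) ℂ) := Matrix.linftyOpNormedRing
  let _ : NormedAlgebra ℝ (Matrix (a × a) (a × a) ℂ) := Matrix.linftyOpNormedAlgebra
  let toMatrix := LinearMap.toMatrix (Matrix.stdBasis ℂ a a) (Matrix.stdBasis ℂ a a)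
  let ψ := (φ.comp (toMatrix.symm.toLinearMap.restrictScalars ℝ)).toContinuousLinearMap
  have hφ : ∀ L', φ L' = ψ (toMatrix L') := fun L' => by simp [ψ]
  have hexp : HasDerivAt (fun t : ℝ => NormedSpace.exp (t • toMatrix L)) (toMatrix L) 0 := by
    have h := hasDerivAt_exp_smul_const (𝕂 := ℝ) (toMatrix L) 0
    rwa [zero_smul, NormedSpace.exp_zero, one_mul] at h
  have hf : (fun t : ℝ => φ (expMap ((t : ℂ) • L))) =
      ψ ∘ fun t => NormedSpace.exp (t • toMatrix L) := by
    funext t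
    simp only [hφ, Function.comp_apply, expMap, LinearMap.toMatrix_toLin, map_smul, toMatrix,
      Complex.coe_smul]
  rw [hf, hφ]
  exact ψ.hasFDerivAt.comp_hasDerivAt 0 hexp

theorem re_trace_mul_tensorMap_id_nonpos {H : Mat b →ₗ[ℂ] Mat b}
    (hH : ∀ t : ℝ, 0 ≤ t → IsCompletelyPositive (expMap ((-(t : ℂ)) • H)))
    {P Q : Mat (a × b)} (hP : P.PosSemidef) (hQ : Q.PosSemidef) (hPQ : P * Q = 0) :
    (P * tensorMap LinearMap.id H Q).trace.re ≤ 0 := by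
  obtain ⟨φ, hφ⟩ : ∃ φ : (Mat b →ₗ[ℂ] Mat b) →ₗ[ℝ] ℝ,
      ∀ L, φ L = (P * tensorMap LinearMap.id L Q).trace.re :=
    ⟨Complex.reLm.comp (((Matrix.traceLinearMap (a × b) ℂ ℂ).comp ((LinearMap.mulLeft ℂ P).comp
      ((LinearMap.applyₗ Q).comp idTensorMapₗ))).restrictScalars ℝ), fun _ => rfl⟩
  have hmin : IsMinOn (fun t : ℝ => φ (expMap ((t : ℂ) • -H))) (Set.Ici 0) 0 := by
    intro t ht
    have hCP : IsCompletelyPositive (expMap ((t : ℂ) • -H)) := by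
      rw [smul_neg, ← neg_smul]
      exact hH t ht
    simp only [Set.mem_ofPred_eq, hφ, Complex.ofReal_zero, zero_smul, expMap_zero,
      tensorMap_id_id, hPQ, Matrix.trace_zero, Complex.zero_re]
    exact (Complex.nonneg_iff.mp (hP.trace_mul_nonneg (hCP.tensorMap_id_posSemidef hQ))).1
  have h := (hasDerivAt_expMap_smul φ (-H)).nonneg_of_isMinOn_Ici hmin
  rwa [map_neg, hφ, neg_nonneg] at h

end Semigroup

section DirichletForm

variable {ι : Type*} [Fintype ι] [DecidableEq ι] {A : Mat ι} (hA : A.IsHermitian)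

theorem re_trace_herFun_mul_herFun (L : Mat ι →ₗ[ℂ] Mat ι) (f g : ℝ → ℝ) :
    ((herFun A hA f)ᴴ * L (herFun A hA g)).trace.re = ∑ i, ∑ j,
      f (hA.eigenvalues i) * g (hA.eigenvalues j) *
        (eigenProj hA i * L (eigenProj hA j)).trace.re := by
  simp only [herFun_eq_sum_eigenProj, map_sum, map_smul, Matrix.conjTranspose_sum,
    Matrix.conjTranspose_smul, conjTranspose_eigenProj, Complex.star_def, Complex.conj_ofReal,
    sum_mul, mul_sum, Matrix.smul_mul, Matrix.mul_smul, Matrix.trace_sum, Matrix.trace_smul,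
    smul_eq_mul, Complex.re_sum, Complex.re_ofReal_mul, mul_assoc]
  rw [sum_comm]
  exact sum_congr rfl fun _ _ => sum_congr rfl fun _ _ => mul_left_comm _ _ _

theorem isLaplacian_re_trace_eigenProj_mul {L : Mat ι →ₗ[ℂ] Mat ι} (hL : L 1 = 0)
    (hLsa : IsSelfAdjointMap L)
    (hLoff : ∀ P Q : Mat ι, P.PosSemidef → Q.PosSemidef → P * Q = 0 → (P * L Q).trace.re ≤ 0) :
    IsLaplacian fun i j => (eigenProj hA i * L (eigenProj hA j)).trace.re where
  symm i j := by
    conv_lhs => rw [← conjTranspose_eigenProj hA i]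
    rw [hLsa, ← Matrix.conjTranspose_conjTranspose (eigenProj hA j),
      ← Matrix.conjTranspose_mul, Matrix.trace_conjTranspose, Complex.star_def, Complex.conj_re,
      conjTranspose_eigenProj, conjTranspose_eigenProj]
  row_sum_eq_zero i := by
    rw [← Complex.re_sum, ← Matrix.trace_sum, ← mul_sum, ← map_sum, sum_eigenProj, hL,
      Matrix.mul_zero, Matrix.trace_zero, Complex.zero_re]
  nonpos_of_ne i j hij := hLoff _ _ (posSemidef_eigenProj hA i) (posSemidef_eigenProj hA j)
    (eigenProj_mul_eigenProj_of_ne hA hij)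

end DirichletForm

theorem gross_lemma_matrix_general
    (H : Mat (Fin 2) →ₗ[ℂ] Mat (Fin 2)) (hH : memGCP H) (n : ℕ)
    (A : Mat ((Fin (n - 1) → Fin 2) × Fin 2)) (hA : A.PosSemidef) (p : ℝ) (hp : 1 < p) :
    ((posPow A hA.isHermitian (p / 2))ᴴ *
        (tensorMap LinearMap.id H) (posPow A hA.isHermitian (p / 2))).trace.re ≤
      (p / 2) ^ 2 / (p - 1) *
        (Aᴴ * (tensorMap LinearMap.id H) (posPow A hA.isHermitian (p - 1))).trace.re := by
  obtain ⟨⟨hH1, hHsa, -⟩, hHcp⟩ := hH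
  have hc := isLaplacian_re_trace_eigenProj_mul hA.isHermitian (tensorMap_id_one hH1)
    hHsa.tensorMap_id fun P Q hP hQ hPQ => re_trace_mul_tensorMap_id_nonpos hHcp hP hQ hPQ
  have hRHS := re_trace_herFun_mul_herFun hA.isHermitian (tensorMap LinearMap.id H) id
    (· ^ (p - 1))
  rw [herFun_id] at hRHS
  rw [posPow, posPow, re_trace_herFun_mul_herFun, hRHS]
  exact hc.sum_mul_mul_le _ _ _ fun i j =>
    rpow_half_sub_sq_le hp (hA.eigenvalues_nonneg i) (hA.eigenvalues_nonneg j)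

/-- **Gross' Lemma, matrix algebra version** (Lemma 5): for `H ∈ G^{CP}`,
`H⁽ⁿ⁾ = id_{2^{n-1}} ⊗ H`, any positive semidefinite `A ∈ M_{2ⁿ}` and `p > 1`,
`⟨A^{p/2}, H⁽ⁿ⁾(A^{p/2})⟩ ≤ ((p/2)²/(p-1)) ⟨A, H⁽ⁿ⁾(A^{p-1})⟩`. -/
theorem gross_lemma_matrix
    (H : Mat (Fin 2) →ₗ[ℂ] Mat (Fin 2)) (hH : memGCP H) (n : ℕ) (hn : 1 ≤ n)
    (A : Mat ((Fin (n - 1) → Fin 2) × Fin 2)) (hA : A.PosSemidef) (p : ℝ) (hp : 1 < p) :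
    ((posPow A hA.isHermitian (p / 2))ᴴ *
        (tensorMap LinearMap.id H) (posPow A hA.isHermitian (p / 2))).trace.re ≤
      (p / 2) ^ 2 / (p - 1) *
        (Aᴴ * (tensorMap LinearMap.id H) (posPow A hA.isHermitian (p - 1))).trace.re :=
  gross_lemma_matrix_general H hH n A hA p hp

end QHC
end

section
/- Let H ∈ G be a self-adjoint positive semidefinite qubit generator with ||H||_min ≥ 1, let n ≥ 1 and 1 ≤ k ≤ n, and let H^{(k)} = id_{M_{2^{k-1}}} ⊗ H ⊗ id_{M_{2^{n-k}}} and H_u^{(k)} = id_{M_{2^{k-1}}} ⊗ H_u ⊗ id_{M_{2^{n-k}}}, where H_u(M) = M − (1/2) Tr(M) I_2 is the uniform generator. Then for every Hermitian A ∈ M_{2^n}, Tr(A · H^{(k)}(A)) ≥ Tr(A · H_u^{(k)}(A)). -/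
open scoped Matrix ComplexOrder

/-! Splitting the index set at site `k`, the quadratic form `Tr(A L⁽ᵏ⁾(A))` of an embedded qubit
map is the sum, over pairs of indices of the other sites, of `Tr(Mᴴ L(M))` for the corresponding
`2 × 2` blocks `M` of `A`; so it suffices to compare the two qubit forms. Both `H` and `H_u` kill
`I₂` and are self-adjoint, so both forms only see the traceless part `M₀` of `M`, on which `H_u`
is the identity, and `‖H‖_min ≥ 1` says exactly that `Tr(M₀ᴴ M₀) ≤ Tr(M₀ᴴ H(M₀))`. -/

namespace QHC

section Frobenius

variable {ι α β R : Type*} [Fintype ι] [Fintype α] [Fintype β]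
  [NonUnitalNonAssocSemiring R] [Star R]

lemma trace_conjTranspose_mul_eq_sum_s15 (A B : Matrix ι ι R) :
    (Aᴴ * B).trace = ∑ i, ∑ j, star (A i j) * B i j := by
  simp only [Matrix.trace, Matrix.diag, Matrix.mul_apply, Matrix.conjTranspose_apply]
  exact Finset.sum_comm

def blockOf (e : ι ≃ α × β) (A : Matrix ι ι R) (s t : β) : Matrix α α R :=
  Matrix.of fun a b => A (e.symm (a, s)) (e.symm (b, t))

lemma trace_conjTranspose_mul_eq_sum_blockOf (e : ι ≃ α × β) (A B : Matrix ι ι R) :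
    (Aᴴ * B).trace = ∑ s, ∑ t, ((blockOf e A s t)ᴴ * blockOf e B s t).trace := by
  simp only [trace_conjTranspose_mul_eq_sum_s15, blockOf, Matrix.of_apply,
    ← e.symm.sum_comp, Fintype.sum_prod_type_right]
  exact Finset.sum_congr rfl fun s _ => Finset.sum_comm

end Frobenius

lemma prod_single_one_apply {ι α R : Type*} [Fintype ι] [DecidableEq α] [CommMonoidWithZero R]
    (u v s t : ι → α) :
    ∏ i, Matrix.single (u i) (v i) (1 : R) (s i) (t i) = if u = s ∧ v = t then 1 else 0 := by
  simp only [Matrix.single_apply, Finset.prod_boole, Finset.mem_univ, true_implies,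
    funext_iff, forall_and]

lemma linearMap_apply_eq_sum_single {α R : Type*} [Fintype α] [DecidableEq α] [CommSemiring R]
    (L : Matrix α α R →ₗ[R] Matrix α α R) (M : Matrix α α R) (x y : α) :
    L M x y = ∑ c, ∑ d, M c d * L (Matrix.single c d 1) x y := by
  conv_lhs => rw [Matrix.matrix_eq_sum_single M]
  simp only [map_sum, Matrix.sum_apply]
  refine Finset.sum_congr rfl fun c _ => Finset.sum_congr rfl fun d _ => ?_
  rw [show Matrix.single c d (M c d) = M c d • Matrix.single c d 1 by simp [Matrix.smul_single],
    map_smul, Matrix.smul_apply, smul_eq_mul]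

lemma blockOf_tensorPow_ite {n : ℕ} (k : Fin n) (L : Mat (Fin 2) →ₗ[ℂ] Mat (Fin 2))
    (A : Mat (Fin n → Fin 2)) (s t : {j // j ≠ k} → Fin 2) :
    blockOf (Equiv.funSplitAt k (Fin 2))
        (tensorPow (fun j => if j = k then L else LinearMap.id) A) s t =
      L (blockOf (Equiv.funSplitAt k (Fin 2)) A s t) := by
  ext a b
  rw [linearMap_apply_eq_sum_single]
  have hne (j : {j // j ≠ k}) : ((j : Fin n) = k) = False := eq_false j.2
  simp only [blockOf, tensorPow, Matrix.of_apply, LinearMap.coe_mk, AddHom.coe_mk,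
    ← (Equiv.funSplitAt k (Fin 2)).symm.sum_comp, Fintype.sum_prod_type,
    Fintype.prod_eq_mul_prod_subtype_ne _ k, Equiv.funSplitAt_symm_apply, dif_pos, if_pos,
    hne, dite_false, if_false, LinearMap.id_apply, Subtype.coe_eta, prod_single_one_apply,
    ite_and, mul_ite, mul_one, mul_zero, ite_mul, zero_mul]
  refine Finset.sum_congr rfl fun c _ => ?_
  rw [Finset.sum_comm]
  simp [mul_comm]

section Superoperators

variable {a : Type*} [Fintype a] [DecidableEq a]

lemma IsSelfAdjointMap.trace_apply_eq_zero {L : Mat a →ₗ[ℂ] Mat a} (hL : IsSelfAdjointMap L)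
    (h1 : L 1 = 0) (M : Mat a) : (L M).trace = 0 := by
  simpa [h1] using hL 1 M

lemma trace_conjTranspose_add_smul_one_mul (M N : Mat a) (c : ℂ) (hN : N.trace = 0) :
    ((M + c • 1)ᴴ * N).trace = (Mᴴ * N).trace := by
  simp [Matrix.add_mul, hN]

lemma re_trace_conjTranspose_mul_self_pos {M : Mat a} (hM : M ≠ 0) :
    0 < (Mᴴ * M).trace.re := by
  have hpos : 0 < (Mᴴ * M).trace :=
    (Matrix.posSemidef_conjTranspose_mul_self M).trace_nonneg.lt_of_ne
      (Ne.symm (Matrix.trace_conjTranspose_mul_self_eq_zero_iff.not.mpr hM))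
  exact (Complex.pos_iff.mp hpos).1

end Superoperators

lemma uniformGen_add_smul_one (M : Mat (Fin 2)) : uniformGen M + (M.trace / 2) • 1 = M :=
  sub_add_cancel M _

lemma trace_uniformGen (M : Mat (Fin 2)) : (uniformGen M).trace = 0 := by
  change (M - (M.trace / 2) • 1).trace = 0
  simp [Matrix.trace_sub]

lemma trace_conjTranspose_mul_uniformGen (M : Mat (Fin 2)) :
    (Mᴴ * uniformGen M).trace = ((uniformGen M)ᴴ * uniformGen M).trace := by
  have h := trace_conjTranspose_add_smul_one_mul (uniformGen M) (uniformGen M) (M.trace / 2)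
    (trace_uniformGen M)
  rwa [uniformGen_add_smul_one] at h

lemma memG.trace_conjTranspose_mul_eq_uniformGen {H : Mat (Fin 2) →ₗ[ℂ] Mat (Fin 2)}
    (hG : memG H) (M : Mat (Fin 2)) :
    (Mᴴ * H M).trace = ((uniformGen M)ᴴ * H (uniformGen M)).trace := by
  have hHM : H M = H (uniformGen M) := by
    conv_lhs => rw [← uniformGen_add_smul_one M]
    simp [hG.1]
  have h := trace_conjTranspose_add_smul_one_mul (uniformGen M) (H (uniformGen M)) (M.trace / 2)
    (hG.2.1.trace_apply_eq_zero hG.1 _)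
  rw [uniformGen_add_smul_one] at h
  rwa [hHM]

lemma normMin_le_div {H : Mat (Fin 2) →ₗ[ℂ] Mat (Fin 2)} (hH : IsPosSemidefMap H)
    {M : Mat (Fin 2)} (hM : M.trace = 0) (hM0 : M ≠ 0) :
    normMin H ≤ (Mᴴ * H M).trace.re / (Mᴴ * M).trace.re := by
  refine ciInf_le ⟨0, ?_⟩ (⟨M, hM, hM0⟩ : {M : Mat (Fin 2) // M.trace = 0 ∧ M ≠ 0})
  rintro _ ⟨N, rfl⟩
  exact div_nonneg (Complex.nonneg_iff.mp (hH.2 N.1)).1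
    (re_trace_conjTranspose_mul_self_pos N.2.2).le

lemma re_trace_conjTranspose_mul_self_le {H : Mat (Fin 2) →ₗ[ℂ] Mat (Fin 2)}
    (hH : IsPosSemidefMap H) (hmin : 1 ≤ normMin H) {M : Mat (Fin 2)} (hM : M.trace = 0) :
    (Mᴴ * M).trace.re ≤ (Mᴴ * H M).trace.re := by
  rcases eq_or_ne M 0 with rfl | hM0
  · simp
  · exact (one_le_div (re_trace_conjTranspose_mul_self_pos hM0)).mp
      (hmin.trans (normMin_le_div hH hM hM0))

lemma re_trace_conjTranspose_mul_uniformGen_le {H : Mat (Fin 2) →ₗ[ℂ] Mat (Fin 2)}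
    (hG : memG H) (hmin : 1 ≤ normMin H) (M : Mat (Fin 2)) :
    (Mᴴ * uniformGen M).trace.re ≤ (Mᴴ * H M).trace.re := by
  rw [trace_conjTranspose_mul_uniformGen, hG.trace_conjTranspose_mul_eq_uniformGen]
  exact re_trace_conjTranspose_mul_self_le hG.2 hmin (trace_uniformGen M)

theorem trace_energy_ge_uniform_general
    (H : Mat (Fin 2) →ₗ[ℂ] Mat (Fin 2)) (hG : memG H) (hmin : 1 ≤ normMin H)
    (n : ℕ) (k : Fin n)
    (A : Mat (Fin n → Fin 2)) (hA : A.IsHermitian) :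
    (A * (tensorPow fun j => if j = k then uniformGen else LinearMap.id) A).trace.re ≤
      (A * (tensorPow fun j => if j = k then H else LinearMap.id) A).trace.re := by
  have hsplit (L : Mat (Fin 2) →ₗ[ℂ] Mat (Fin 2)) :
      (A * (tensorPow fun j => if j = k then L else LinearMap.id) A).trace.re =
        ∑ s, ∑ t, ((blockOf (Equiv.funSplitAt k (Fin 2)) A s t)ᴴ *
          L (blockOf (Equiv.funSplitAt k (Fin 2)) A s t)).trace.re := by
    nth_rw 1 [← hA.eq]
    simp only [trace_conjTranspose_mul_eq_sum_blockOf (Equiv.funSplitAt k (Fin 2)),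
      blockOf_tensorPow_ite, Complex.re_sum]
  rw [hsplit, hsplit]
  exact Finset.sum_le_sum fun s _ => Finset.sum_le_sum fun t _ =>
    re_trace_conjTranspose_mul_uniformGen_le hG hmin _

/-- Comparison with the uniform generator: if `H ∈ G` has `‖H‖_min ≥ 1`, then for the
`k`-th embeddings `H⁽ᵏ⁾` and `H_u⁽ᵏ⁾` into `M_{2ⁿ}` and every Hermitian `A`,
`Tr(A H⁽ᵏ⁾(A)) ≥ Tr(A H_u⁽ᵏ⁾(A))`. -/
theorem trace_energy_ge_uniform
    (H : Mat (Fin 2) →ₗ[ℂ] Mat (Fin 2)) (hG : memG H) (hmin : 1 ≤ normMin H)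
    (n : ℕ) (hn : 1 ≤ n) (k : Fin n)
    (A : Mat (Fin n → Fin 2)) (hA : A.IsHermitian) :
    (A * (tensorPow fun j => if j = k then uniformGen else LinearMap.id) A).trace.re ≤
      (A * (tensorPow fun j => if j = k then H else LinearMap.id) A).trace.re :=
  trace_energy_ge_uniform_general H hG hmin n k A hA

end QHC
end
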